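/- arXiv:2509.23623 — 2 statements merged into one kernel-verified Lean document; each statement's English description precedes it below -/
import Mathlib

section
/- Let μ > 0 and define W(x,y) = (μ/2)(x² + y² + 1/(x²y²) − 3) on the open positive quadrant {(x,y) ∈ ℝ² : x > 0, y > 0}. Then W is strictly convex on this set. -/
/-!
Both `x² + y²` and `-2 log x - 2 log y` are sums of strictly convex functions of the separate
coordinates, hence strictly convex (two distinct points differ in at least one coordinate).
Composing the latter with the increasing convex `exp` gives `1 / (x²y²)`, so it is strictly
convex as well.
-/

open Real Set

section

variable {𝕜 E F β : Type*}

theorem StrictConvexOn.smul [CommSemiring 𝕜] [PartialOrder 𝕜] [AddCommMonoid E] [SMul 𝕜 E]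
    [AddCommMonoid β] [PartialOrder β] [Module 𝕜 β] [PosSMulStrictMono 𝕜 β]
    {s : Set E} {f : E → β} {c : 𝕜} (hc : 0 < c) (hf : StrictConvexOn 𝕜 s f) :
    StrictConvexOn 𝕜 s fun x => c • f x :=
  ⟨hf.1, fun x hx y hy hxy a b ha hb hab =>
    calc
      c • f (a • x + b • y) < c • (a • f x + b • f y) :=
        smul_lt_smul_of_pos_left (hf.2 hx hy hxy ha hb hab) hc
      _ = a • c • f x + b • c • f y := by rw [smul_add, smul_comm c, smul_comm c]⟩

theorem StrictConvexOn.add_fst_snd [Semiring 𝕜] [PartialOrder 𝕜] [AddCommMonoid E]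
    [AddCommMonoid F] [Module 𝕜 E] [Module 𝕜 F] [AddCommMonoid β] [PartialOrder β]
    [IsOrderedCancelAddMonoid β] [Module 𝕜 β] {s : Set E} {t : Set F} {f : E → β} {g : F → β}
    (hf : StrictConvexOn 𝕜 s f) (hg : StrictConvexOn 𝕜 t g) :
    StrictConvexOn 𝕜 (s ×ˢ t) fun p => f p.1 + g p.2 := by
  refine ⟨hf.1.prod hg.1, fun p hp q hq hpq a b ha hb hab => ?_⟩
  calc f (a • p.1 + b • q.1) + g (a • p.2 + b • q.2)
      < (a • f p.1 + b • f q.1) + (a • g p.2 + b • g q.2) := by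
        obtain h | h := not_and_or.1 fun h : p.1 = q.1 ∧ p.2 = q.2 => hpq (Prod.ext h.1 h.2)
        · exact add_lt_add_of_lt_of_le (hf.2 hp.1 hq.1 h ha hb hab)
            (hg.convexOn.2 hp.2 hq.2 ha.le hb.le hab)
        · exact add_lt_add_of_le_of_lt (hf.convexOn.2 hp.1 hq.1 ha.le hb.le hab)
            (hg.2 hp.2 hq.2 h ha hb hab)
    _ = a • (f p.1 + g p.2) + b • (f q.1 + g q.2) := by simp only [smul_add]; abel

theorem StrictConvexOn.exp [AddCommMonoid E] [Module ℝ E] {s : Set E} {f : E → ℝ}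
    (hf : StrictConvexOn ℝ s f) : StrictConvexOn ℝ s fun x => exp (f x) :=
  ⟨hf.1, fun _ hx _ hy hxy _ _ ha hb hab => (exp_lt_exp.2 (hf.2 hx hy hxy ha hb hab)).trans_le
    (convexOn_exp.2 (mem_univ _) (mem_univ _) ha.le hb.le hab)⟩

end

theorem strictConvexOn_sq_add_sq : StrictConvexOn ℝ univ fun p : ℝ × ℝ => p.1 ^ 2 + p.2 ^ 2 := by
  have h := Even.strictConvexOn_pow (n := 2) even_two two_ne_zero
  simpa only [univ_prod_univ] using h.add_fst_snd h

theorem strictConvexOn_one_div_sq_mul_sq :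
    StrictConvexOn ℝ (Ioi 0 ×ˢ Ioi 0) fun p : ℝ × ℝ => 1 / (p.1 ^ 2 * p.2 ^ 2) := by
  have hlog := strictConcaveOn_log_Ioi.neg.smul (two_pos : (0 : ℝ) < 2)
  refine (hlog.add_fst_snd hlog).exp.congr fun p ⟨hx, hy⟩ => ?_
  simp only [smul_eq_mul, Pi.neg_apply]
  have hxy : 0 < p.1 * p.2 := mul_pos hx hy
  rw [← mul_add, ← neg_add, ← log_mul hx.ne' hy.ne', mul_neg, ← log_rpow hxy, exp_neg,
    exp_log (rpow_pos_of_pos hxy _)]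
  norm_num [mul_pow]

/-- The constrained Neo-Hookean strain energy
`W(x,y) = (μ/2)(x² + y² + 1/(x²y²) − 3)` with shear modulus `μ > 0` is strictly
convex on the open positive quadrant `{(x,y) : x > 0, y > 0}`. -/
theorem neoHookean_strictConvexOn
    (μ : ℝ) (hμ : 0 < μ) :
    StrictConvexOn ℝ {p : ℝ × ℝ | 0 < p.1 ∧ 0 < p.2}
      (fun p : ℝ × ℝ => μ / 2 * (p.1 ^ 2 + p.2 ^ 2 + 1 / (p.1 ^ 2 * p.2 ^ 2) - 3)) := by
  have hsum := (strictConvexOn_sq_add_sq.subset (subset_univ _)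
    ((convex_Ioi 0).prod (convex_Ioi 0))).add strictConvexOn_one_div_sq_mul_sq
  refine ((hsum.add_const (-3)).smul (half_pos hμ)).congr fun p _ => ?_
  simp only [Pi.add_apply, smul_eq_mul, sub_eq_add_neg]
end

section
/- Let μ > 0, let W(x,y) = (μ/2)(x² + y² + 1/(x²y²) − 3) for x, y > 0, and let W_safe ∈ ℝ. Then the safe set {(x,y) ∈ ℝ² : x > 0, y > 0, W(x,y) ≤ W_safe} is convex. -/
open Real Set

private lemma neg_two_log_fst_convex :
    ConvexOn ℝ ((Ioi (0:ℝ)) ×ˢ (Ioi (0:ℝ))) (fun p : ℝ × ℝ => -2 * Real.log p.1) := by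
  have h : ConvexOn ℝ (Ioi (0:ℝ)) (fun x => (2:ℝ) • (-Real.log x)) :=
    ((strictConcaveOn_log_Ioi.concaveOn).neg).smul (by norm_num)
  have h2 := h.comp_affineMap ((LinearMap.fst ℝ ℝ ℝ).toAffineMap)
  refine (h2.subset ?_ ((convex_Ioi 0).prod (convex_Ioi 0))).congr ?_
  · intro p hp; exact hp.1
  · intro p _; simp [smul_eq_mul]

private lemma neg_two_log_snd_convex :
    ConvexOn ℝ ((Ioi (0:ℝ)) ×ˢ (Ioi (0:ℝ))) (fun p : ℝ × ℝ => -2 * Real.log p.2) := by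
  have h : ConvexOn ℝ (Ioi (0:ℝ)) (fun x => (2:ℝ) • (-Real.log x)) :=
    ((strictConcaveOn_log_Ioi.concaveOn).neg).smul (by norm_num)
  have h2 := h.comp_affineMap ((LinearMap.snd ℝ ℝ ℝ).toAffineMap)
  refine (h2.subset ?_ ((convex_Ioi 0).prod (convex_Ioi 0))).congr ?_
  · intro p hp; exact hp.2
  · intro p _; simp [smul_eq_mul]

/-- The safe set of the constrained Neo-Hookean strain energy
`W(x,y) = (μ/2)(x² + y² + 1/(x²y²) − 3)`, consisting of all positive stretch pairs
whose strain energy does not exceed the critical level `W_safe`, is convex. -/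
theorem neoHookean_safe_set_convex
    (μ : ℝ) (hμ : 0 < μ) (Wsafe : ℝ) :
    Convex ℝ {p : ℝ × ℝ | 0 < p.1 ∧ 0 < p.2 ∧
      μ / 2 * (p.1 ^ 2 + p.2 ^ 2 + 1 / (p.1 ^ 2 * p.2 ^ 2) - 3) ≤ Wsafe} := by
  set S : Set (ℝ × ℝ) := (Ioi (0:ℝ)) ×ˢ (Ioi (0:ℝ)) with hSdef
  have hS : Convex ℝ S := (convex_Ioi 0).prod (convex_Ioi 0)
  set L : ℝ × ℝ → ℝ := fun p => -2 * Real.log p.1 - 2 * Real.log p.2 with hLdef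
  have hL : ConvexOn ℝ S L := by
    have := neg_two_log_fst_convex.add neg_two_log_snd_convex
    exact this.congr (fun p _ => by simp [hLdef]; ring)
  -- exp ∘ L is convex on S
  have hE : ConvexOn ℝ S (fun p => Real.exp (L p)) := by
    refine ⟨hS, fun p hp q hq a b ha hb hab => ?_⟩
    calc Real.exp (L (a • p + b • q)) ≤ Real.exp (a • L p + b • L q) :=
          Real.exp_le_exp.2 (hL.2 hp hq ha hb hab)
      _ ≤ a • Real.exp (L p) + b • Real.exp (L q) := by
          simpa [smul_eq_mul] using
            convexOn_exp.2 (mem_univ (L p)) (mem_univ (L q)) ha hb hab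
  -- squares are convex
  have hx2 : ConvexOn ℝ S (fun p : ℝ × ℝ => p.1 ^ 2) := by
    have h := (Even.convexOn_pow (n := 2) (by norm_num)).comp_affineMap
      ((LinearMap.fst ℝ ℝ ℝ).toAffineMap)
    exact (h.subset (fun p _ => mem_univ _) hS).congr (fun p _ => rfl)
  have hy2 : ConvexOn ℝ S (fun p : ℝ × ℝ => p.2 ^ 2) := by
    have h := (Even.convexOn_pow (n := 2) (by norm_num)).comp_affineMap
      ((LinearMap.snd ℝ ℝ ℝ).toAffineMap)
    exact (h.subset (fun p _ => mem_univ _) hS).congr (fun p _ => rfl)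
  -- the full energy with the exp form
  have hf : ConvexOn ℝ S
      (fun p => μ / 2 * (p.1 ^ 2 + p.2 ^ 2 + Real.exp (L p) - 3)) := by
    have hsum : ConvexOn ℝ S
        (fun p => p.1 ^ 2 + p.2 ^ 2 + Real.exp (L p) - 3) := by
      have := ((hx2.add hy2).add hE).sub (concaveOn_const 3 hS)
      exact this.congr (fun p _ => rfl)
    have := hsum.smul (c := μ / 2) (by positivity)
    exact this.congr (fun p _ => by simp [smul_eq_mul])
  have hconv := hf.convex_le Wsafe
  convert hconv using 1
  ext p
  simp only [mem_setOf_eq, mem_sep_iff, hSdef, mem_prod, mem_Ioi]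
  constructor
  · rintro ⟨hx, hy, h⟩
    refine ⟨⟨hx, hy⟩, ?_⟩
    have : Real.exp (L p) = 1 / (p.1 ^ 2 * p.2 ^ 2) := by
      have hxy : (0:ℝ) < p.1 ^ 2 * p.2 ^ 2 := by positivity
      have : L p = -Real.log (p.1 ^ 2 * p.2 ^ 2) := by
        rw [hLdef]
        rw [Real.log_mul (by positivity) (by positivity), Real.log_pow, Real.log_pow]
        push_cast; ring
      rw [this, Real.exp_neg, Real.exp_log hxy, one_div]
    rw [this]; exact h
  · rintro ⟨⟨hx, hy⟩, h⟩
    refine ⟨hx, hy, ?_⟩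
    have : Real.exp (L p) = 1 / (p.1 ^ 2 * p.2 ^ 2) := by
      have hxy : (0:ℝ) < p.1 ^ 2 * p.2 ^ 2 := by positivity
      have : L p = -Real.log (p.1 ^ 2 * p.2 ^ 2) := by
        rw [hLdef]
        rw [Real.log_mul (by positivity) (by positivity), Real.log_pow, Real.log_pow]
        push_cast; ring
      rw [this, Real.exp_neg, Real.exp_log hxy, one_div]
    rw [← this]; exact h
end
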